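/- Let (H,K) be a match pair of finite groupoids for G. For every h ∈ H, the cardinality of K^{s(h)} = {k ∈ K : r(k) = s(h)} equals the cardinality of K^{r(h)} = {k ∈ K : r(k) = r(h)}. -/

import Mathlib

/-- A (small) groupoid structure on a carrier type `G` of "arrows", with
source map `s`, range map `r`, partial multiplication `mul` (defined when
`s x = r y`) and inversion `inv`.  Units are identified with the elements
`s x`, `r x`. -/
structure Gpd (G : Type*) where
  s : G → G
  r : G → G
  mul : ∀ x y : G, s x = r y → G
  inv : G → G
  s_mul : ∀ x y h, s (mul x y h) = s y
  r_mul : ∀ x y h, r (mul x y h) = r x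
  s_inv : ∀ x, s (inv x) = r x
  r_inv : ∀ x, r (inv x) = s x
  s_s : ∀ x, s (s x) = s x
  r_s : ∀ x, r (s x) = s x
  s_r : ∀ x, s (r x) = r x
  r_r : ∀ x, r (r x) = r x
  mul_source : ∀ x (h : s x = r (s x)), mul x (s x) h = x
  range_mul : ∀ x (h : s (r x) = r x), mul (r x) x h = x
  mul_inv : ∀ x (h : s x = r (inv x)), mul x (inv x) h = r x
  inv_mul : ∀ x (h : s (inv x) = r x), mul (inv x) x h = s x
  mul_assoc : ∀ x y z (hxy : s x = r y) (hyz : s y = r z)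
      (h1 : s (mul x y hxy) = r z) (h2 : s x = r (mul y z hyz)),
      mul (mul x y hxy) z h1 = mul x (mul y z hyz) h2

namespace Gpd

variable {G : Type*} (𝒢 : Gpd G)

/-- The set of units `G⁰` of the groupoid. -/
def units : Set G := {u | 𝒢.r u = u}

/-- A wide subgroupoid: a subset closed under multiplication and inversion and
containing all units. -/
structure IsSubgpd (H : Set G) : Prop where
  mul_mem : ∀ x y (h : 𝒢.s x = 𝒢.r y), x ∈ H → y ∈ H → 𝒢.mul x y h ∈ H
  inv_mem : ∀ x, x ∈ H → 𝒢.inv x ∈ H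
  unit_mem : ∀ u, u ∈ 𝒢.units → u ∈ H

/-- A match pair of subgroupoids `H`, `K` of `G`, together with the projection
maps `p₁ : G → H`, `p₂ : G → K` of the unique factorization `g = p₁ g * p₂ g`. -/
structure MatchPair (H K : Set G) (p₁ p₂ : G → G) : Prop where
  subH : 𝒢.IsSubgpd H
  subK : 𝒢.IsSubgpd K
  inter : H ∩ K ⊆ 𝒢.units
  p₁_mem : ∀ g, p₁ g ∈ H
  p₂_mem : ∀ g, p₂ g ∈ K
  comp : ∀ g, 𝒢.s (p₁ g) = 𝒢.r (p₂ g)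
  decomp : ∀ g, g = 𝒢.mul (p₁ g) (p₂ g) (comp g)
  uniq : ∀ h, h ∈ H → ∀ k, k ∈ K → ∀ hc : 𝒢.s h = 𝒢.r k,
      p₁ (𝒢.mul h k hc) = h ∧ p₂ (𝒢.mul h k hc) = k

theorem MatchPair.s_p₂ {H K : Set G} {p₁ p₂ : G → G}
    (mp : 𝒢.MatchPair H K p₁ p₂) (g : G) : 𝒢.s (p₂ g) = 𝒢.s g := by
  conv_rhs => rw [mp.decomp g]
  rw [𝒢.s_mul]

theorem MatchPair.r_p₁ {H K : Set G} {p₁ p₂ : G → G}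
    (mp : 𝒢.MatchPair H K p₁ p₂) (g : G) : 𝒢.r (p₁ g) = 𝒢.r g := by
  conv_rhs => rw [mp.decomp g]
  rw [𝒢.r_mul]

/-- the left "action" `k ▷ h = p₁ (kh)` -/
def rAct (p₁ : G → G) (k h : G) (hc : 𝒢.s k = 𝒢.r h) : G := p₁ (𝒢.mul k h hc)

/-- the right "action" `k ◁ h = p₂ (kh)` -/
def lAct (p₂ : G → G) (k h : G) (hc : 𝒢.s k = 𝒢.r h) : G := p₂ (𝒢.mul k h hc)

end Gpd

/-!
For every arrow `g` (not only `g ∈ H`), sending `k ∈ K^{s g}` to the `K`-part `k'` of the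
factorisation `g k = k' h'` is a bijection `K^{s g} → K^{r g}`: its inverse is the same
construction for `g⁻¹`, because `g⁻¹ k' = k h'⁻¹` has `K`-part `k`.
-/

namespace Gpd

variable {G : Type*} (𝒢 : Gpd G)

attribute [simp] s_mul r_mul s_inv r_inv s_s r_s s_r r_r

theorem mul_congr {x x' y y' : G} (hx : x = x') (hy : y = y')
    (hc : 𝒢.s x = 𝒢.r y) (hc' : 𝒢.s x' = 𝒢.r y') :
    𝒢.mul x y hc = 𝒢.mul x' y' hc' := by
  subst hx hy; rfl

theorem mul_eq_left {x u : G} (hu : u = 𝒢.s x) (hc : 𝒢.s x = 𝒢.r u) : 𝒢.mul x u hc = x := by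
  subst hu; exact 𝒢.mul_source x hc

theorem mul_eq_right {u x : G} (hu : u = 𝒢.r x) (hc : 𝒢.s u = 𝒢.r x) : 𝒢.mul u x hc = x := by
  subst hu; exact 𝒢.range_mul x hc

theorem inv_mul_cancel_left (x y : G) (hxy : 𝒢.s x = 𝒢.r y)
    (hc : 𝒢.s (𝒢.inv x) = 𝒢.r (𝒢.mul x y hxy)) :
    𝒢.mul (𝒢.inv x) (𝒢.mul x y hxy) hc = y :=
  calc 𝒢.mul (𝒢.inv x) (𝒢.mul x y hxy) hc
      = 𝒢.mul (𝒢.mul (𝒢.inv x) x (𝒢.s_inv x)) y (by simp [hxy]) :=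
        (𝒢.mul_assoc _ _ _ _ _ _ _).symm
    _ = 𝒢.mul (𝒢.s x) y (by simp [hxy]) := 𝒢.mul_congr (𝒢.inv_mul x _) rfl _ _
    _ = y := 𝒢.mul_eq_right hxy _

theorem mul_inv_cancel_right (x y : G) (hxy : 𝒢.s x = 𝒢.r y)
    (hc : 𝒢.s (𝒢.mul x y hxy) = 𝒢.r (𝒢.inv y)) :
    𝒢.mul (𝒢.mul x y hxy) (𝒢.inv y) hc = x :=
  calc 𝒢.mul (𝒢.mul x y hxy) (𝒢.inv y) hc
      = 𝒢.mul x (𝒢.mul y (𝒢.inv y) (by simp)) (by simp [hxy]) := 𝒢.mul_assoc _ _ _ _ _ _ _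
    _ = 𝒢.mul x (𝒢.r y) (by simp [hxy]) := 𝒢.mul_congr rfl (𝒢.mul_inv y _) _ _
    _ = x := 𝒢.mul_eq_left hxy.symm _

theorem inv_inv (x : G) : 𝒢.inv (𝒢.inv x) = x :=
  calc 𝒢.inv (𝒢.inv x)
      = 𝒢.mul (𝒢.inv (𝒢.inv x)) (𝒢.s x) (by simp) := (𝒢.mul_eq_left (by simp) _).symm
    _ = 𝒢.mul (𝒢.inv (𝒢.inv x)) (𝒢.mul (𝒢.inv x) x (𝒢.s_inv x)) (by simp) :=
        𝒢.mul_congr rfl (𝒢.inv_mul x _).symm _ _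
    _ = x := 𝒢.inv_mul_cancel_left _ _ _ _

theorem mul_inv_rev (x y : G) (hxy : 𝒢.s x = 𝒢.r y)
    (hc : 𝒢.s (𝒢.inv y) = 𝒢.r (𝒢.inv x)) :
    𝒢.inv (𝒢.mul x y hxy) = 𝒢.mul (𝒢.inv y) (𝒢.inv x) hc := by
  set z := 𝒢.mul x y hxy
  have hzx : 𝒢.mul (𝒢.inv z) x (by simp [z]) = 𝒢.inv y :=
    calc 𝒢.mul (𝒢.inv z) x (by simp [z])
        = 𝒢.mul (𝒢.inv z) (𝒢.mul z (𝒢.inv y) (by simp [z])) (by simp [z]) :=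
          𝒢.mul_congr rfl (𝒢.mul_inv_cancel_right x y hxy _).symm _ _
      _ = 𝒢.inv y := 𝒢.inv_mul_cancel_left _ _ _ _
  calc 𝒢.inv z
      = 𝒢.mul (𝒢.mul (𝒢.inv z) x (by simp [z])) (𝒢.inv x) (by simp) :=
        (𝒢.mul_inv_cancel_right _ _ _ _).symm
    _ = 𝒢.mul (𝒢.inv y) (𝒢.inv x) hc := 𝒢.mul_congr hzx rfl _ _

/- The factors of the factorisation `g = kPart g * hPart g` through `K H`, obtained by
inverting the `H K`-factorisation of `g⁻¹`. -/
def kPart (p₂ : G → G) (g : G) : G := 𝒢.inv (p₂ (𝒢.inv g))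

def hPart (p₁ : G → G) (g : G) : G := 𝒢.inv (p₁ (𝒢.inv g))

namespace MatchPair

variable {𝒢} {H K : Set G} {p₁ p₂ : G → G}

theorem kPart_mem (mp : 𝒢.MatchPair H K p₁ p₂) (g : G) : 𝒢.kPart p₂ g ∈ K :=
  mp.subK.inv_mem _ (mp.p₂_mem _)

theorem hPart_mem (mp : 𝒢.MatchPair H K p₁ p₂) (g : G) : 𝒢.hPart p₁ g ∈ H :=
  mp.subH.inv_mem _ (mp.p₁_mem _)

theorem r_kPart (mp : 𝒢.MatchPair H K p₁ p₂) (g : G) : 𝒢.r (𝒢.kPart p₂ g) = 𝒢.r g := by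
  simp [kPart, mp.s_p₂]

theorem s_kPart (mp : 𝒢.MatchPair H K p₁ p₂) (g : G) :
    𝒢.s (𝒢.kPart p₂ g) = 𝒢.r (𝒢.hPart p₁ g) := by
  simp [kPart, hPart, mp.comp]

theorem s_hPart (mp : 𝒢.MatchPair H K p₁ p₂) (g : G) : 𝒢.s (𝒢.hPart p₁ g) = 𝒢.s g := by
  simp [hPart, mp.r_p₁]

theorem kPart_mul_hPart (mp : 𝒢.MatchPair H K p₁ p₂) (g : G) :
    𝒢.mul (𝒢.kPart p₂ g) (𝒢.hPart p₁ g) (mp.s_kPart g) = g :=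
  calc 𝒢.mul (𝒢.kPart p₂ g) (𝒢.hPart p₁ g) (mp.s_kPart g)
      = 𝒢.inv (𝒢.mul (p₁ (𝒢.inv g)) (p₂ (𝒢.inv g)) (mp.comp _)) :=
        (𝒢.mul_inv_rev _ _ _ _).symm
    _ = g := by rw [← mp.decomp, 𝒢.inv_inv]

theorem kPart_mul (mp : 𝒢.MatchPair H K p₁ p₂) {k h : G} (hk : k ∈ K) (hh : h ∈ H)
    (hc : 𝒢.s k = 𝒢.r h) : 𝒢.kPart p₂ (𝒢.mul k h hc) = k := by
  rw [kPart, 𝒢.mul_inv_rev k h hc (by simp [hc]),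
    (mp.uniq _ (mp.subH.inv_mem h hh) _ (mp.subK.inv_mem k hk) _).2, 𝒢.inv_inv]

theorem kPart_inv_mul_kPart_mul (mp : 𝒢.MatchPair H K p₁ p₂) {g k : G} (hk : k ∈ K)
    (hc : 𝒢.s g = 𝒢.r k) (hc' : 𝒢.s (𝒢.inv g) = 𝒢.r (𝒢.kPart p₂ (𝒢.mul g k hc))) :
    𝒢.kPart p₂ (𝒢.mul (𝒢.inv g) (𝒢.kPart p₂ (𝒢.mul g k hc)) hc') = k := by
  set z := 𝒢.mul g k hc
  have hz : 𝒢.kPart p₂ z = 𝒢.mul z (𝒢.inv (𝒢.hPart p₁ z)) (by simp [z, mp.s_hPart]) :=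
    calc 𝒢.kPart p₂ z
        = 𝒢.mul (𝒢.mul (𝒢.kPart p₂ z) (𝒢.hPart p₁ z) (mp.s_kPart z))
            (𝒢.inv (𝒢.hPart p₁ z)) (by simp) := (𝒢.mul_inv_cancel_right _ _ _ _).symm
      _ = _ := 𝒢.mul_congr (mp.kPart_mul_hPart z) rfl _ _
  have hs : 𝒢.s k = 𝒢.r (𝒢.inv (𝒢.hPart p₁ z)) := by simp [z, mp.s_hPart]
  calc 𝒢.kPart p₂ (𝒢.mul (𝒢.inv g) (𝒢.kPart p₂ z) hc')
      = 𝒢.kPart p₂ (𝒢.mul (𝒢.inv g) (𝒢.mul z (𝒢.inv (𝒢.hPart p₁ z)) _) (by simp [z])) :=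
        congrArg _ (𝒢.mul_congr rfl hz _ _)
    _ = 𝒢.kPart p₂ (𝒢.mul (𝒢.mul (𝒢.inv g) z (by simp [z])) (𝒢.inv (𝒢.hPart p₁ z))
          (by simp [z, hs])) := congrArg _ (𝒢.mul_assoc _ _ _ _ _ _ _).symm
    _ = 𝒢.kPart p₂ (𝒢.mul k (𝒢.inv (𝒢.hPart p₁ z)) hs) :=
        congrArg _ (𝒢.mul_congr (𝒢.inv_mul_cancel_left g k hc _) rfl _ _)
    _ = k := mp.kPart_mul hk (mp.subH.inv_mem _ (mp.hPart_mem z)) hs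

end MatchPair

end Gpd

theorem stmt2_general {G : Type*} (𝒢 : Gpd G) (H K : Set G) (p₁ p₂ : G → G)
    (mp : 𝒢.MatchPair H K p₁ p₂) (h : G) :
    Set.ncard {k | k ∈ K ∧ 𝒢.r k = 𝒢.s h} = Set.ncard {k | k ∈ K ∧ 𝒢.r k = 𝒢.r h} := by
  refine Set.ncard_congr (fun k hk => 𝒢.kPart p₂ (𝒢.mul h k hk.2.symm))
    (fun k _ => ⟨mp.kPart_mem _, by simp [mp.r_kPart]⟩) ?_ ?_
  · intro a b ha hb hab
    calc a = 𝒢.kPart p₂ (𝒢.mul (𝒢.inv h) (𝒢.kPart p₂ (𝒢.mul h a ha.2.symm)) _) :=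
          (mp.kPart_inv_mul_kPart_mul ha.1 _ (by simp [mp.r_kPart])).symm
      _ = 𝒢.kPart p₂ (𝒢.mul (𝒢.inv h) (𝒢.kPart p₂ (𝒢.mul h b hb.2.symm))
            (by simp [mp.r_kPart])) := congrArg _ (𝒢.mul_congr rfl hab _ _)
      _ = b := mp.kPart_inv_mul_kPart_mul hb.1 _ _
  · rintro k ⟨hk, hr⟩
    have hc : 𝒢.s (𝒢.inv h) = 𝒢.r k := by simp [hr]
    refine ⟨𝒢.kPart p₂ (𝒢.mul (𝒢.inv h) k hc), ⟨mp.kPart_mem _, by simp [mp.r_kPart]⟩, ?_⟩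
    calc 𝒢.kPart p₂ (𝒢.mul h (𝒢.kPart p₂ (𝒢.mul (𝒢.inv h) k hc)) _)
        = 𝒢.kPart p₂ (𝒢.mul (𝒢.inv (𝒢.inv h)) (𝒢.kPart p₂ (𝒢.mul (𝒢.inv h) k hc))
            (by simp [mp.r_kPart])) := congrArg _ (𝒢.mul_congr (𝒢.inv_inv h).symm rfl _ _)
      _ = k := mp.kPart_inv_mul_kPart_mul hk _ _

/-- For a match pair `(H,K)` of finite groupoids and `h ∈ H`,
`Card (K^{s h}) = Card (K^{r h})`. -/
theorem stmt2 {G : Type*} [Finite G] (𝒢 : Gpd G) (H K : Set G) (p₁ p₂ : G → G)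
    (mp : 𝒢.MatchPair H K p₁ p₂) (h : G) (hh : h ∈ H) :
    Set.ncard {k | k ∈ K ∧ 𝒢.r k = 𝒢.s h} = Set.ncard {k | k ∈ K ∧ 𝒢.r k = 𝒢.r h} :=
  stmt2_general 𝒢 H K p₁ p₂ mp h
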